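/- arXiv:2104.13784 — 4 statements merged into one kernel-verified Lean document; each statement's English description precedes it below -/
import Mathlib

section
/- For every integer K ≥ 1 and all integers 1 ≤ k, l ≤ K, the log-canonical bracket satisfies the telescoping identity: { ∏_{j=1}^{k} y_{2j−1}² , ∏_{j=1}^{l} y_{2j}^{−2} }_y equals −(∏_{j=1}^{k} y_{2j−1}²)·(∏_{j=1}^{l} y_{2j}^{−2}) if k ≤ l, and equals 0 if k > l. -/
noncomputable section

open Finset

/-- The space of cluster variables `(y_1, …, y_{2K})`; we use 1-based indexing, so the
vector has `2K+1` slots and slot `0` is a dummy unused coordinate. -/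
abbrev YV (K : ℕ) := Fin (2*K+1) → ℂ

/-- Access `y_j` by its (1-based) natural-number index. -/
def yv (K : ℕ) (y : YV K) (j : ℕ) : ℂ := y ⟨j % (2*K+1), Nat.mod_lt _ (by omega)⟩

/-- Partial derivative with respect to `y_i`. -/
def pY (K : ℕ) (i : Fin (2*K+1)) (f : YV K → ℂ) (y : YV K) : ℂ :=
  fderiv ℂ f y (Pi.single i 1)

/-- The log-canonical bracket
`{f, g}_y = (1/4) Σ_{i=1}^{2K−1} y_i y_{i+1} (∂f/∂y_i ∂g/∂y_{i+1} − ∂f/∂y_{i+1} ∂g/∂y_i)`. -/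
def lcBr (K : ℕ) (f g : YV K → ℂ) (y : YV K) : ℂ :=
  (1/4 : ℂ) * ∑ i : Fin (2*K-1),
    yv K y ((i:ℕ)+1) * yv K y ((i:ℕ)+2) *
      (pY K ⟨(i:ℕ)+1, by have := i.isLt; omega⟩ f y *
         pY K ⟨(i:ℕ)+2, by have := i.isLt; omega⟩ g y
       - pY K ⟨(i:ℕ)+2, by have := i.isLt; omega⟩ f y *
         pY K ⟨(i:ℕ)+1, by have := i.isLt; omega⟩ g y)

/-- `nestList [a₁, …, a_m] = 1 + a₁(1 + a₂(⋯(1 + a_m)⋯))`. -/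
def nestList : List ℂ → ℂ
  | [] => 1
  | a :: t => 1 + a * nestList t

/-- The Stokes parameters `s_n`, `n = 1, …, 2K+2` (paper's 1-based indexing) of the
cluster parametrization:
`s_1 = −y_1^{−2}`;
`s_{2k} = (1+y_{2k}²)·∏_{j=1}^{2k} y_j^{2(−1)^{j+1}}` for `k = 1, …, K`;
`s_{2k+1} = −(1+y_{2k+1}²)·∏_{j=1}^{2k+1} y_j^{2(−1)^{j}}` for `k = 1, …, K−1`;
`s_{2K+1} = −∏_{j=1}^{2K} y_j^{2(−1)^{j}}`;
`s_{2K+2} = y_1²·(1+y_2²(1+y_4²(⋯(1+y_{2K}²)⋯)))·∏_{j=1}^{K} y_{2j}^{−4}`. -/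
def sY (K : ℕ) (n : ℕ) (y : YV K) : ℂ :=
  if n = 1 then -(yv K y 1) ^ (-2 : ℤ)
  else if n = 2*K+1 then -∏ j ∈ range (2*K), (yv K y (j+1)) ^ ((-1:ℤ)^(j+1) * 2)
  else if n = 2*K+2 then
    (yv K y 1)^2 * nestList (List.ofFn fun k : Fin K => (yv K y (2*(k:ℕ)+2))^2)
      * ∏ j ∈ range K, (yv K y (2*(j+1))) ^ (-4 : ℤ)
  else if n % 2 = 0 then
    (1 + (yv K y n)^2) * ∏ j ∈ range n, (yv K y (j+1)) ^ ((-1:ℤ)^j * 2)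
  else -((1 + (yv K y n)^2) * ∏ j ∈ range n, (yv K y (j+1)) ^ ((-1:ℤ)^(j+1) * 2))

/-- `λ = ∏_{j=1}^K y_{2j}²`. -/
def lamY (K : ℕ) (y : YV K) : ℂ := ∏ j ∈ range K, (yv K y (2*(j+1)))^2

/- ====== auxiliary material ====== -/

lemma hasFDerivAt_coord_zpow (K : ℕ) (c : ℤ) (i : Fin (2*K+1)) (y : YV K) (hy : y i ≠ 0) :
    HasFDerivAt (fun t : YV K => (t i) ^ c)
      (((c : ℂ) * (y i) ^ (c-1)) • (ContinuousLinearMap.proj i : YV K →L[ℂ] ℂ)) y := by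
  have h1 : HasFDerivAt (fun t : YV K => t i)
      (ContinuousLinearMap.proj i : YV K →L[ℂ] ℂ) y :=
    (ContinuousLinearMap.proj i : YV K →L[ℂ] ℂ).hasFDerivAt
  exact (hasDerivAt_zpow c (y i) (Or.inl hy)).comp_hasFDerivAt y h1

lemma pY_prod_eval (K k : ℕ) (c : ℤ) (e : ℕ → Fin (2*K+1)) (y : YV K)
    (hy : ∀ j ∈ range k, y (e j) ≠ 0) (i : Fin (2*K+1)) :
    pY K i (fun t => ∏ j ∈ range k, (t (e j)) ^ c) y
      = ∑ j ∈ range k,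
          if e j = i then (c:ℂ) * (∏ m ∈ range k, (y (e m))^c) * (y i)⁻¹ else 0 := by
  have H : HasFDerivAt (fun t : YV K => ∏ j ∈ range k, (t (e j)) ^ c)
      (∑ j ∈ range k, (∏ m ∈ (range k).erase j, (y (e m)) ^ c) •
        (((c : ℂ) * (y (e j)) ^ (c-1)) • (ContinuousLinearMap.proj (e j) : YV K →L[ℂ] ℂ))) y :=
    HasFDerivAt.finset_prod fun j hj => hasFDerivAt_coord_zpow K c (e j) y (hy j hj)
  rw [pY, H.fderiv]
  rw [ContinuousLinearMap.sum_apply]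
  refine Finset.sum_congr rfl fun j hj => ?_
  simp only [ContinuousLinearMap.smul_apply, ContinuousLinearMap.proj_apply, smul_eq_mul]
  rw [Pi.single_apply]
  by_cases h : e j = i
  · subst h
    simp only [if_pos rfl, mul_one]
    have h0 : y (e j) ≠ 0 := hy j hj
    have hz : (y (e j)) ^ (c-1) = (y (e j))^c * (y (e j))⁻¹ := by
      rw [zpow_sub_one₀ h0]
    rw [hz, ← Finset.prod_erase_mul (range k) _ hj]
    simp only [if_true]
    ring
  · simp [h]

lemma sum_ite_odd (k n : ℕ) (C : ℂ) :
    (∑ j ∈ range k, if 2*j+1 = n then C else 0)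
      = if n % 2 = 1 ∧ n + 1 ≤ 2*k then C else 0 := by
  by_cases h : n % 2 = 1 ∧ n + 1 ≤ 2*k
  · have hiff : ∀ j : ℕ, (2*j+1 = n) ↔ (j = n/2) := fun j => by omega
    simp only [hiff]
    rw [Finset.sum_ite_eq' (range k) (n/2) (fun _ => C)]
    rw [if_pos (mem_range.mpr (by omega)), if_pos h]
  · rw [if_neg h]
    exact Finset.sum_eq_zero fun j hj => if_neg (by have := mem_range.mp hj; omega)

lemma sum_ite_even (l n : ℕ) (C : ℂ) :
    (∑ j ∈ range l, if 2*(j+1) = n then C else 0)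
      = if n % 2 = 0 ∧ 2 ≤ n ∧ n ≤ 2*l then C else 0 := by
  by_cases h : n % 2 = 0 ∧ 2 ≤ n ∧ n ≤ 2*l
  · have hiff : ∀ j : ℕ, (2*(j+1) = n) ↔ (j = n/2 - 1) := fun j => by omega
    simp only [hiff]
    rw [Finset.sum_ite_eq' (range l) (n/2-1) (fun _ => C)]
    rw [if_pos (mem_range.mpr (by omega)), if_pos h]
  · rw [if_neg h]
    exact Finset.sum_eq_zero fun j hj => if_neg (by have := mem_range.mp hj; omega)

lemma czpow_two (x : ℂ) : x ^ (2:ℤ) = x^2 := by exact_mod_cast zpow_natCast x 2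

lemma czpow_neg_two (x : ℂ) : x ^ (-2:ℤ) = (x^2)⁻¹ := by
  rw [show ((-2:ℤ)) = -(2:ℤ) from rfl, zpow_neg]; norm_cast

/-- odd coordinate index -/
def efF (K : ℕ) (j : ℕ) : Fin (2*K+1) := ⟨(2*j+1) % (2*K+1), Nat.mod_lt _ (by omega)⟩
/-- even coordinate index -/
def efG (K : ℕ) (j : ℕ) : Fin (2*K+1) := ⟨(2*(j+1)) % (2*K+1), Nat.mod_lt _ (by omega)⟩

def hfun (P Q : ℂ) (k l : ℕ) : ℕ → ℂ := fun n =>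
  if n % 2 = 1 ∧ n + 1 ≤ 2*k ∧ k ≤ l then -(4*(P*Q))
  else if n % 2 = 0 ∧ n ≤ 2*l ∧ l < k then 4*(P*Q) else 0

lemma tele_odd (P Q y1 y2 : ℂ) (hy1 : y1 ≠ 0) (hy2 : y2 ≠ 0) (k l n : ℕ) (hn : n % 2 = 1) :
    y1 * y2 * ((if n % 2 = 1 ∧ n+1 ≤ 2*k then 2*P*y1⁻¹ else 0) *
               (if (n+1) % 2 = 0 ∧ 2 ≤ n+1 ∧ n+1 ≤ 2*l then (-2)*Q*y2⁻¹ else 0)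
             - (if (n+1) % 2 = 1 ∧ (n+1)+1 ≤ 2*k then 2*P*y2⁻¹ else 0) *
               (if n % 2 = 0 ∧ 2 ≤ n ∧ n ≤ 2*l then (-2)*Q*y1⁻¹ else 0))
      = hfun P Q k l n - hfun P Q k l (n+1) := by
  have c1 : (n % 2 = 1 ∧ n+1 ≤ 2*k) ↔ (n+1 ≤ 2*k) := by omega
  have c2 : ((n+1) % 2 = 0 ∧ 2 ≤ n+1 ∧ n+1 ≤ 2*l) ↔ (n+1 ≤ 2*l) := by omega
  have c3 : ¬((n+1) % 2 = 1 ∧ (n+1)+1 ≤ 2*k) := by omega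
  have c4 : ¬(n % 2 = 0 ∧ 2 ≤ n ∧ n ≤ 2*l) := by omega
  have h1 : (n % 2 = 1 ∧ n+1 ≤ 2*k ∧ k ≤ l) ↔ (n+1 ≤ 2*k ∧ k ≤ l) := by omega
  have h2 : ¬(n % 2 = 0 ∧ n ≤ 2*l ∧ l < k) := by omega
  have h3 : ¬((n+1) % 2 = 1 ∧ (n+1)+1 ≤ 2*k ∧ k ≤ l) := by omega
  have h4 : ((n+1) % 2 = 0 ∧ n+1 ≤ 2*l ∧ l < k) ↔ (n+1 ≤ 2*l ∧ l < k) := by omega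
  simp only [hfun, c1, c2, c3, c4, h1, h2, h3, h4, if_false]
  split_ifs <;> first
    | (exfalso; omega)
    | ring1
    | (field_simp; ring1)

lemma tele_even (P Q y1 y2 : ℂ) (hy1 : y1 ≠ 0) (hy2 : y2 ≠ 0) (k l n : ℕ)
    (hn : n % 2 = 0) (hn1 : 1 ≤ n) :
    y1 * y2 * ((if n % 2 = 1 ∧ n+1 ≤ 2*k then 2*P*y1⁻¹ else 0) *
               (if (n+1) % 2 = 0 ∧ 2 ≤ n+1 ∧ n+1 ≤ 2*l then (-2)*Q*y2⁻¹ else 0)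
             - (if (n+1) % 2 = 1 ∧ (n+1)+1 ≤ 2*k then 2*P*y2⁻¹ else 0) *
               (if n % 2 = 0 ∧ 2 ≤ n ∧ n ≤ 2*l then (-2)*Q*y1⁻¹ else 0))
      = hfun P Q k l n - hfun P Q k l (n+1) := by
  have c1 : ¬(n % 2 = 1 ∧ n+1 ≤ 2*k) := by omega
  have c2 : ¬((n+1) % 2 = 0 ∧ 2 ≤ n+1 ∧ n+1 ≤ 2*l) := by omega
  have c3 : ((n+1) % 2 = 1 ∧ (n+1)+1 ≤ 2*k) ↔ (n+2 ≤ 2*k) := by omega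
  have c4 : (n % 2 = 0 ∧ 2 ≤ n ∧ n ≤ 2*l) ↔ (n ≤ 2*l) := by omega
  have h1 : ¬(n % 2 = 1 ∧ n+1 ≤ 2*k ∧ k ≤ l) := by omega
  have h2 : (n % 2 = 0 ∧ n ≤ 2*l ∧ l < k) ↔ (n ≤ 2*l ∧ l < k) := by omega
  have h3 : ((n+1) % 2 = 1 ∧ (n+1)+1 ≤ 2*k ∧ k ≤ l) ↔ (n+2 ≤ 2*k ∧ k ≤ l) := by omega
  have h4 : ¬((n+1) % 2 = 0 ∧ n+1 ≤ 2*l ∧ l < k) := by omega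
  simp only [hfun, c1, c2, c3, c4, h1, h2, h3, h4, if_false]
  split_ifs <;> first
    | (exfalso; omega)
    | ring1
    | (field_simp; ring1)

/-- the telescoping identity
`{ ∏_{j=1}^{k} y_{2j−1}² , ∏_{j=1}^{l} y_{2j}^{−2} }_y
  = −(∏_{j=1}^{k} y_{2j−1}²)(∏_{j=1}^{l} y_{2j}^{−2})` if `k ≤ l`, and `= 0` if `k > l`. -/
theorem cluster_telescoping (K : ℕ) (hK : 1 ≤ K) (y : YV K)
    (hy : ∀ i : Fin (2*K+1), (i:ℕ) ≠ 0 → y i ≠ 0)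
    (k l : ℕ) (hk1 : 1 ≤ k) (hk : k ≤ K) (hl1 : 1 ≤ l) (hl : l ≤ K) :
    lcBr K (fun t => ∏ j ∈ range k, (yv K t (2*j+1))^2)
           (fun t => ∏ j ∈ range l, ((yv K t (2*(j+1)))^2)⁻¹) y
      = if k ≤ l then
          -((∏ j ∈ range k, (yv K y (2*j+1))^2) * ∏ j ∈ range l, ((yv K y (2*(j+1)))^2)⁻¹)
        else 0 := by
  set P : ℂ := ∏ j ∈ range k, (yv K y (2*j+1))^2 with hP
  set Q : ℂ := ∏ j ∈ range l, ((yv K y (2*(j+1)))^2)⁻¹ with hQ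
  -- nonvanishing along the used coordinates
  have hyF : ∀ j ∈ range k, y (efF K j) ≠ 0 := by
    intro j hj
    have hjk := mem_range.mp hj
    apply hy
    show (2*j+1) % (2*K+1) ≠ 0
    have hm : (2*j+1) % (2*K+1) = 2*j+1 := Nat.mod_eq_of_lt (by omega)
    omega
  have hyG : ∀ j ∈ range l, y (efG K j) ≠ 0 := by
    intro j hj
    have hjl := mem_range.mp hj
    apply hy
    show (2*(j+1)) % (2*K+1) ≠ 0
    have hm : (2*(j+1)) % (2*K+1) = 2*(j+1) := Nat.mod_eq_of_lt (by omega)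
    omega
  -- rewrite the two functions in zpow form
  have hfe : (fun t : YV K => ∏ j ∈ range k, (yv K t (2*j+1))^2)
      = fun t : YV K => ∏ j ∈ range k, (t (efF K j)) ^ (2:ℤ) := by
    funext t; exact Finset.prod_congr rfl fun j _ => (czpow_two _).symm
  have hge : (fun t : YV K => ∏ j ∈ range l, ((yv K t (2*(j+1)))^2)⁻¹)
      = fun t : YV K => ∏ j ∈ range l, (t (efG K j)) ^ (-2:ℤ) := by
    funext t; exact Finset.prod_congr rfl fun j _ => (czpow_neg_two _).symm
  -- evaluation of the partial derivatives
  have hF : ∀ (n : ℕ) (hn : n < 2*K+1),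
      pY K ⟨n, hn⟩ (fun t : YV K => ∏ j ∈ range k, (yv K t (2*j+1))^2) y
        = if n % 2 = 1 ∧ n + 1 ≤ 2*k then 2*P*(y ⟨n,hn⟩)⁻¹ else 0 := by
    intro n hn
    rw [hfe, pY_prod_eval K k 2 (efF K) y hyF ⟨n,hn⟩]
    have hPP : (∏ m ∈ range k, (y (efF K m))^(2:ℤ)) = P := by
      rw [hP]; exact Finset.prod_congr rfl fun m _ => czpow_two _
    have hcongr : ∀ j ∈ range k,
        (if efF K j = ⟨n,hn⟩ then ((2:ℤ):ℂ) * (∏ m ∈ range k, (y (efF K m))^(2:ℤ)) * (y ⟨n,hn⟩)⁻¹ else 0)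
        = (if 2*j+1 = n then 2*P*(y ⟨n,hn⟩)⁻¹ else 0) := by
      intro j hj
      have hjk := mem_range.mp hj
      have hm : (2*j+1) % (2*K+1) = 2*j+1 := Nat.mod_eq_of_lt (by omega)
      have hc : (efF K j = ⟨n,hn⟩) ↔ (2*j+1 = n) := by
        rw [Fin.ext_iff]; simp [efF, hm]
      rw [hPP]
      simp only [hc]
      norm_num
    rw [Finset.sum_congr rfl hcongr, sum_ite_odd]
  have hG : ∀ (n : ℕ) (hn : n < 2*K+1),
      pY K ⟨n, hn⟩ (fun t : YV K => ∏ j ∈ range l, ((yv K t (2*(j+1)))^2)⁻¹) y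
        = if n % 2 = 0 ∧ 2 ≤ n ∧ n ≤ 2*l then (-2)*Q*(y ⟨n,hn⟩)⁻¹ else 0 := by
    intro n hn
    rw [hge, pY_prod_eval K l (-2) (efG K) y hyG ⟨n,hn⟩]
    have hQQ : (∏ m ∈ range l, (y (efG K m))^(-2:ℤ)) = Q := by
      rw [hQ]; exact Finset.prod_congr rfl fun m _ => czpow_neg_two _
    have hcongr : ∀ j ∈ range l,
        (if efG K j = ⟨n,hn⟩ then ((-2:ℤ):ℂ) * (∏ m ∈ range l, (y (efG K m))^(-2:ℤ)) * (y ⟨n,hn⟩)⁻¹ else 0)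
        = (if 2*(j+1) = n then (-2)*Q*(y ⟨n,hn⟩)⁻¹ else 0) := by
      intro j hj
      have hjl := mem_range.mp hj
      have hm : (2*(j+1)) % (2*K+1) = 2*(j+1) := Nat.mod_eq_of_lt (by omega)
      have hc : (efG K j = ⟨n,hn⟩) ↔ (2*(j+1) = n) := by
        rw [Fin.ext_iff]; simp [efG, hm]
      rw [hQQ]
      simp only [hc]
      norm_num
    rw [Finset.sum_congr rfl hcongr, sum_ite_even]
  -- value of the (1-based) coordinates
  have yval : ∀ (n : ℕ) (hn : n < 2*K+1), yv K y n = y ⟨n, hn⟩ :=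
    fun n hn => congrArg y (Fin.ext (Nat.mod_eq_of_lt hn))
  -- the per-term telescoping identity
  have perterm : ∀ i : Fin (2*K-1),
      yv K y ((i:ℕ)+1) * yv K y ((i:ℕ)+2) *
        (pY K ⟨(i:ℕ)+1, by have := i.isLt; omega⟩
            (fun t => ∏ j ∈ range k, (yv K t (2*j+1))^2) y *
           pY K ⟨(i:ℕ)+2, by have := i.isLt; omega⟩
            (fun t => ∏ j ∈ range l, ((yv K t (2*(j+1)))^2)⁻¹) y
         - pY K ⟨(i:ℕ)+2, by have := i.isLt; omega⟩
            (fun t => ∏ j ∈ range k, (yv K t (2*j+1))^2) y *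
           pY K ⟨(i:ℕ)+1, by have := i.isLt; omega⟩
            (fun t => ∏ j ∈ range l, ((yv K t (2*(j+1)))^2)⁻¹) y)
      = hfun P Q k l ((i:ℕ)+1) - hfun P Q k l ((i:ℕ)+2) := by
    intro i
    have hlt := i.isLt
    have hn1 : (i:ℕ)+1 < 2*K+1 := by omega
    have hn2 : (i:ℕ)+2 < 2*K+1 := by omega
    rw [hF _ _, hF _ _, hG _ _, hG _ _, yval ((i:ℕ)+1) hn1, yval ((i:ℕ)+2) hn2]
    have hy1 : y ⟨(i:ℕ)+1, hn1⟩ ≠ 0 := hy _ (by simp)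
    have hy2 : y ⟨(i:ℕ)+2, hn2⟩ ≠ 0 := hy _ (by simp)
    rcases Nat.even_or_odd ((i:ℕ)+1) with he | ho
    · exact tele_even P Q _ _ hy1 hy2 k l ((i:ℕ)+1) (Nat.even_iff.mp he) (by omega)
    · exact tele_odd P Q _ _ hy1 hy2 k l ((i:ℕ)+1) (Nat.odd_iff.mp ho)
  -- assemble
  have main : lcBr K (fun t => ∏ j ∈ range k, (yv K t (2*j+1))^2)
      (fun t => ∏ j ∈ range l, ((yv K t (2*(j+1)))^2)⁻¹) y
      = (1/4 : ℂ) * (hfun P Q k l 1 - hfun P Q k l (2*K)) := by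
    unfold lcBr
    congr 1
    refine Eq.trans (Finset.sum_congr rfl fun i _ => perterm i) ?_
    rw [Fin.sum_univ_eq_sum_range (fun n => hfun P Q k l (n+1) - hfun P Q k l (n+2)) (2*K-1)]
    have tele : ∀ m : ℕ, ∑ i ∈ range m, (hfun P Q k l (i+1) - hfun P Q k l (i+2))
        = hfun P Q k l 1 - hfun P Q k l (m+1) := by
      intro m
      induction m with
      | zero => simp
      | succ p ih => rw [Finset.sum_range_succ, ih]; ring
    rw [tele, show 2*K-1+1 = 2*K from by omega]
  rw [main]
  have e1 : hfun P Q k l 1 = (if k ≤ l then -(4*(P*Q)) else 0) := by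
    unfold hfun
    by_cases hkl : k ≤ l
    · rw [if_pos ⟨by omega, by omega, hkl⟩, if_pos hkl]
    · rw [if_neg (fun h => hkl h.2.2), if_neg (by omega), if_neg hkl]
  have e2 : hfun P Q k l (2*K) = 0 := by
    unfold hfun
    rw [if_neg (by omega), if_neg (by omega)]
  rw [e1, e2]
  by_cases hkl : k ≤ l
  · rw [if_pos hkl, if_pos hkl]; ring1
  · rw [if_neg hkl, if_neg hkl]; ring1
end
end

section
/- For every integer K ≥ 1 and all odd indices j < l with 1 ≤ j < l ≤ 2K+1, the log-canonical bracket of the cluster parametrization satisfies {s_j, s_l}_y = −s_j s_l, as an identity of rational functions of y on (ℂ*)^{2K}. -/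
noncomputable section

open Finset

/-!
Up to sign, each odd Stokes parameter is a Laurent monomial `P_n = ∏_{i ≤ n} y_i^{2(-1)^i}`
(`s_1 = -P_1`, `s_{2K+1} = -P_{2K}`), possibly times the factor `1 + y_n²`, which depends on
`y_n` alone. Hence the Euler operators `E_i = y_i ∂/∂y_i` act on `s_n` by `E_i s_n = 2(-1)^i s_n`
for `i < n` and `E_i s_n = 0` for `n < i`. The bracket is `1/4 Σ_i (E_i s_j E_{i+1} s_l -
E_{i+1} s_j E_i s_l)`, and for odd `j < l` these summands telescope to `2 s_l E_1 s_j = -4 s_j s_l`.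
-/

section EulerOperator

variable {ι : Type*} [Fintype ι]

theorem differentiableAt_prod_apply_zpow {α : Type*} (s : Finset α) (e : α → ι) (c : α → ℤ)
    {y : ι → ℂ} (hy : ∀ t ∈ s, y (e t) ≠ 0) :
    DifferentiableAt ℂ (fun z => ∏ t ∈ s, z (e t) ^ c t) y := by
  classical
  exact (HasFDerivAt.finsetProd fun t ht =>
    ((differentiableAt_apply (e t) y).zpow (Or.inl (hy t ht))).hasFDerivAt).differentiableAt

variable [DecidableEq ι]

def eulerOp (i : ι) (f : (ι → ℂ) → ℂ) (y : ι → ℂ) : ℂ := y i * fderiv ℂ f y (Pi.single i 1)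

theorem eulerOp_neg (i : ι) (f : (ι → ℂ) → ℂ) (y : ι → ℂ) :
    eulerOp i (fun z => -f z) y = -eulerOp i f y := by
  simp [eulerOp, fderiv_fun_neg]

theorem eulerOp_prod_zpow {α : Type*} (s : Finset α) (e : α → ι) (c : α → ℤ) {y : ι → ℂ}
    (hy : ∀ t ∈ s, y (e t) ≠ 0) (i : ι) :
    eulerOp i (fun z => ∏ t ∈ s, z (e t) ^ c t) y
      = (∑ t ∈ s with e t = i, (c t : ℂ)) * ∏ t ∈ s, y (e t) ^ c t := by
  classical
  have hfactor : ∀ t ∈ s, HasFDerivAt (fun z : ι → ℂ => z (e t) ^ c t)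
      (((c t : ℂ) * y (e t) ^ (c t - 1)) • ContinuousLinearMap.proj (R := ℂ) (e t)) y :=
    fun t ht => (hasDerivAt_zpow (c t) _ (Or.inl (hy t ht))).comp_hasFDerivAt
      (f := fun z : ι → ℂ => z (e t)) y (hasFDerivAt_apply (e t) y)
  rw [eulerOp, (HasFDerivAt.finsetProd hfactor).fderiv]
  simp only [_root_.sum_apply, smul_apply, ContinuousLinearMap.proj_apply, Pi.single_apply,
    smul_eq_mul, mul_ite, mul_one, mul_zero]
  rw [Finset.sum_filter, Finset.sum_mul, Finset.mul_sum]
  refine Finset.sum_congr rfl fun t ht => ?_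
  split_ifs with h
  · subst h
    have hyt := hy t ht
    rw [← Finset.mul_prod_erase s _ ht, zpow_sub_one₀ hyt]
    field_simp
  · ring

theorem eulerOp_mul_of_ne {i m : ι} (him : i ≠ m) {φ : ℂ → ℂ} {f : (ι → ℂ) → ℂ} {y : ι → ℂ}
    (hφ : DifferentiableAt ℂ φ (y m)) (hf : DifferentiableAt ℂ f y) :
    eulerOp i (fun z => φ (z m) * f z) y = φ (y m) * eulerOp i f y := by
  have hφm : HasFDerivAt (fun z : ι → ℂ => φ (z m))
      (fderiv ℂ φ (y m) ∘L ContinuousLinearMap.proj m) y :=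
    hφ.hasFDerivAt.comp y (hasFDerivAt_apply m y)
  rw [eulerOp, eulerOp, fderiv_fun_mul hφm.differentiableAt hf, hφm.fderiv]
  simp only [add_apply, smul_apply, smul_eq_mul, ContinuousLinearMap.comp_apply,
    ContinuousLinearMap.proj_apply, Pi.single_eq_of_ne him.symm, map_zero, mul_zero, add_zero]
  ring

end EulerOperator

theorem sum_range_cross_of_alternating {u v : ℕ → ℂ} {c : ℂ} {j M : ℕ} (hjM : j ≤ M)
    (hv : ∀ a, 1 ≤ a → a ≤ j + 1 → v a = 2 * (-1) ^ a * c)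
    (hu : ∀ a, j < a → a ≤ M + 1 → u a = 0) :
    ∑ i ∈ range M, (u (i + 1) * v (i + 2) - u (i + 2) * v (i + 1)) = 2 * c * u 1 := by
  set F : ℕ → ℂ := fun i => 2 * (-1) ^ i * c * u (i + 1)
  have hterm : ∀ i ∈ range M,
      u (i + 1) * v (i + 2) - u (i + 2) * v (i + 1) = F i - F (i + 1) := by
    intro i hi
    simp only [F]
    have hiM := mem_range.mp hi
    by_cases hij : i + 1 ≤ j
    · rw [hv (i + 1) (by omega) (by omega), hv (i + 2) (by omega) (by omega)]
      ring
    · rw [hu (i + 1) (by omega) (by omega), hu (i + 2) (by omega) (by omega)]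
      ring
  rw [sum_congr rfl hterm, sum_range_sub']
  simp [F, hu (M + 1) (by omega) le_rfl]

namespace StokesCluster

variable {K : ℕ}

def coord (K a : ℕ) : Fin (2 * K + 1) := ⟨a % (2 * K + 1), Nat.mod_lt _ (by omega)⟩

theorem yv_eq (y : YV K) (a : ℕ) : yv K y a = y (coord K a) := rfl

theorem coord_eq_mk {a : ℕ} (ha : a < 2 * K + 1) : coord K a = ⟨a, ha⟩ :=
  Fin.ext (Nat.mod_eq_of_lt ha)

theorem coord_inj {a b : ℕ} (ha : a < 2 * K + 1) (hb : b < 2 * K + 1) :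
    coord K a = coord K b ↔ a = b := by
  rw [coord_eq_mk ha, coord_eq_mk hb, Fin.mk.injEq]

theorem lcBr_eq_sum_eulerOp (f g : YV K → ℂ) (y : YV K) :
    lcBr K f g y = (1 / 4) * ∑ i ∈ range (2 * K - 1),
      (eulerOp (coord K (i + 1)) f y * eulerOp (coord K (i + 2)) g y
        - eulerOp (coord K (i + 2)) f y * eulerOp (coord K (i + 1)) g y) := by
  rw [lcBr, ← Fin.sum_univ_eq_sum_range]
  congr 1
  refine sum_congr rfl fun i _ => ?_
  have hi := i.isLt
  have h1 : coord K (i + 1) = ⟨i + 1, by omega⟩ := coord_eq_mk _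
  have h2 : coord K (i + 2) = ⟨i + 2, by omega⟩ := coord_eq_mk _
  simp only [eulerOp, pY, yv_eq, h1, h2]
  ring

def altMonomial (K n : ℕ) (z : YV K) : ℂ :=
  ∏ t ∈ range n, yv K z (t + 1) ^ ((-1 : ℤ) ^ (t + 1) * 2)

variable {y : YV K}

theorem apply_coord_ne_zero (hy : ∀ i : Fin (2 * K + 1), (i : ℕ) ≠ 0 → y i ≠ 0) {a : ℕ}
    (ha1 : 1 ≤ a) (ha : a ≤ 2 * K) : y (coord K a) ≠ 0 :=
  hy _ (by rw [coord, Fin.val_mk, Nat.mod_eq_of_lt (by omega)]; omega)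

theorem differentiableAt_altMonomial (hy : ∀ i : Fin (2 * K + 1), (i : ℕ) ≠ 0 → y i ≠ 0)
    {n : ℕ} (hn : n ≤ 2 * K) : DifferentiableAt ℂ (altMonomial K n) y :=
  differentiableAt_prod_apply_zpow _ _ _ fun t ht =>
    apply_coord_ne_zero hy (by omega) (by have := mem_range.mp ht; omega)

theorem eulerOp_altMonomial (hy : ∀ i : Fin (2 * K + 1), (i : ℕ) ≠ 0 → y i ≠ 0)
    {n a : ℕ} (hn : n ≤ 2 * K) (ha1 : 1 ≤ a) (ha : a ≤ 2 * K) :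
    eulerOp (coord K a) (altMonomial K n) y
      = (if a ≤ n then 2 * (-1) ^ a else 0) * altMonomial K n y := by
  have hsum : ∑ t ∈ range n with coord K (t + 1) = coord K a, (((-1 : ℤ) ^ (t + 1) * 2 : ℤ) : ℂ)
      = if a ≤ n then 2 * (-1) ^ a else 0 := by
    rw [sum_filter]
    have hterm : ∀ t ∈ range n, (if coord K (t + 1) = coord K a
        then (((-1 : ℤ) ^ (t + 1) * 2 : ℤ) : ℂ) else 0) = if a - 1 = t then 2 * (-1) ^ a else 0 := by
      intro t ht
      have := mem_range.mp ht
      simp only [coord_inj (K := K) (a := t + 1) (b := a) (by omega) (by omega)]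
      by_cases hta : t + 1 = a
      · rw [if_pos hta, if_pos (by omega), ← hta]
        push_cast
        ring
      · rw [if_neg hta, if_neg (by omega)]
    rw [sum_congr rfl hterm, sum_ite_eq]
    exact if_congr (by rw [mem_range]; omega) rfl rfl
  rw [← hsum]
  exact eulerOp_prod_zpow _ _ _ (fun t ht =>
    apply_coord_ne_zero hy (by omega) (by have := mem_range.mp ht; omega)) _

theorem sY_one : sY K 1 = fun z => -altMonomial K 1 z := by
  funext z
  simp [sY, altMonomial]

theorem sY_top (hK : 1 ≤ K) : sY K (2 * K + 1) = fun z => -altMonomial K (2 * K) z := by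
  funext z
  rw [sY, if_neg (by omega), if_pos rfl, altMonomial]

theorem sY_of_odd {n : ℕ} (hn : Odd n) (hn1 : n ≠ 1) (hnK : n < 2 * K + 1) :
    sY K n = fun z => -((1 + yv K z n ^ 2) * altMonomial K n z) := by
  have := Nat.odd_iff.mp hn
  funext z
  rw [sY, if_neg hn1, if_neg hnK.ne, if_neg (by omega), if_neg (by omega), altMonomial]

theorem eulerOp_sY_odd (hy : ∀ i : Fin (2 * K + 1), (i : ℕ) ≠ 0 → y i ≠ 0) {n a : ℕ}
    (hn : Odd n) (hnK : n ≤ 2 * K + 1) (ha1 : 1 ≤ a) (ha : a ≤ 2 * K) (han : a ≠ n ∨ n = 1) :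
    eulerOp (coord K a) (sY K n) y = (if a ≤ n then 2 * (-1) ^ a else 0) * sY K n y := by
  rcases eq_or_ne n 1 with rfl | hn1
  · rw [sY_one, eulerOp_neg, eulerOp_altMonomial hy (by omega) ha1 ha]
    ring
  rcases eq_or_ne n (2 * K + 1) with rfl | hnK'
  · rw [sY_top (by omega), eulerOp_neg, eulerOp_altMonomial hy le_rfl ha1 ha,
      if_pos ha, if_pos (by omega)]
    ring
  have hnK : n < 2 * K + 1 := lt_of_le_of_ne hnK hnK'
  have hcoord : coord K a ≠ coord K n := by
    rw [Ne, coord_inj (by omega) hnK]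
    tauto
  rw [sY_of_odd hn hn1 hnK, eulerOp_neg]
  simp only [yv_eq]
  rw [eulerOp_mul_of_ne hcoord (φ := fun t => 1 + t ^ 2) (by fun_prop)
      (differentiableAt_altMonomial hy (by omega)),
    eulerOp_altMonomial hy (by omega) ha1 ha]
  ring

end StokesCluster

open StokesCluster

theorem cluster_bracket_odd_odd_general (K : ℕ) (y : YV K)
    (hy : ∀ i : Fin (2*K+1), (i:ℕ) ≠ 0 → y i ≠ 0)
    (j l : ℕ) (hjodd : Odd j) (hlodd : Odd l) (hjl : j < l) (hl : l ≤ 2*K+1) :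
    lcBr K (sY K j) (sY K l) y = -(sY K j y * sY K l y) := by
  have hjmod := Nat.odd_iff.mp hjodd
  have hlmod := Nat.odd_iff.mp hlodd
  have hjK : j ≤ 2 * K - 1 := by omega
  have hv : ∀ a, 1 ≤ a → a ≤ j + 1 →
      eulerOp (coord K a) (sY K l) y = 2 * (-1) ^ a * sY K l y := fun a ha1 ha => by
    rw [eulerOp_sY_odd hy hlodd hl ha1 (by omega) (Or.inl (by omega)), if_pos (by omega)]
  have hu : ∀ a, j < a → a ≤ 2 * K - 1 + 1 → eulerOp (coord K a) (sY K j) y = 0 :=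
    fun a hja ha => by
      rw [eulerOp_sY_odd hy hjodd (by omega) (by omega) (by omega) (Or.inl (by omega)),
        if_neg (by omega), zero_mul]
  rw [lcBr_eq_sum_eulerOp, sum_range_cross_of_alternating hjK hv hu,
    eulerOp_sY_odd hy hjodd (by omega) le_rfl (by omega) (by omega), if_pos (by omega)]
  ring

/-- for odd indices `j < l` with `1 ≤ j < l ≤ 2K+1`,
`{s_j, s_l}_y = −s_j s_l`, identically on `(ℂ*)^{2K}`. -/
theorem cluster_bracket_odd_odd (K : ℕ) (hK : 1 ≤ K) (y : YV K)
    (hy : ∀ i : Fin (2*K+1), (i:ℕ) ≠ 0 → y i ≠ 0)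
    (j l : ℕ) (hjodd : Odd j) (hlodd : Odd l) (hj1 : 1 ≤ j) (hjl : j < l) (hl : l ≤ 2*K+1) :
    lcBr K (sY K j) (sY K l) y = -(sY K j y * sY K l y) :=
  cluster_bracket_odd_odd_general K y hy j l hjodd hlodd hjl hl
end
end

section
/- For every integer K ≥ 1 and all integers 1 ≤ k ≤ l ≤ K, the log-canonical bracket of the cluster parametrization satisfies {s_{2k}, s_{2l+1}}_y = δ_{k,l} + s_{2k} s_{2l+1}, as an identity of rational functions of y on (ℂ*)^{2K}; in particular the bracket equals 1 + s_{2k} s_{2k+1} when l = k and equals s_{2k} s_{2l+1} when l > k. -/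
noncomputable section

open Finset

/-!
Both parameters are sums of Laurent monomials with alternating exponents `±2` supported on an
initial segment: `s_{2k} = y^a + y^{a'}` and `s_{2l+1} = -(y^{b'} + y^b)`, where `a, a', b', b`
have lengths `2k, 2k-1, 2l, 2l+1` (and the term `y^b` is absent when `l = K`). On monomials the
bracket is `{y^e, y^f} = ω(e, f)/4 · y^e y^f` with `ω(e, f) = Σ_i (e_i f_{i+1} - e_{i+1} f_i)`,
and for alternating vectors of lengths `n ≤ m` everything telescopes to the boundary term at
`i = n`: `ω = 4` if `n < m` and `ω = 0` if `n = m`. Hence each pair of monomials contributes its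
product, except `(y^a, y^{b'})` when `k = l`, and then the missing product is `y^a y^{b'} = 1`.
-/

namespace ClusterBracket

section LaurentMonomial

variable {ι : Type*} [Fintype ι]

def laurentMonomial (e : ι → ℤ) (y : ι → ℂ) : ℂ := ∏ j, y j ^ e j

theorem laurentMonomial_neg (e : ι → ℤ) (y : ι → ℂ) :
    laurentMonomial (-e) y = (laurentMonomial e y)⁻¹ := by
  simp [laurentMonomial, zpow_neg, Finset.prod_inv_distrib]

theorem laurentMonomial_ne_zero {e : ι → ℤ} {y : ι → ℂ} (he : ∀ j, e j ≠ 0 → y j ≠ 0) :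
    laurentMonomial e y ≠ 0 :=
  Finset.prod_ne_zero_iff.mpr fun j _ => by
    by_cases h : e j = 0
    · simp [h]
    · exact zpow_ne_zero _ (he j h)

variable [DecidableEq ι]

theorem laurentMonomial_add_single {e : ι → ℤ} {y : ι → ℂ} {i : ι} (hyi : y i ≠ 0) (n : ℤ) :
    laurentMonomial (e + Pi.single i n) y = y i ^ n * laurentMonomial e y := by
  simp only [laurentMonomial, Pi.add_apply, ← Finset.mul_prod_erase univ _ (mem_univ i),
    Pi.single_eq_same, zpow_add₀ hyi]
  rw [Finset.prod_congr rfl fun m hm => by rw [Pi.single_eq_of_ne (ne_of_mem_erase hm), add_zero]]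
  ring

theorem hasFDerivAt_laurentMonomial {e : ι → ℤ} {y : ι → ℂ} (he : ∀ j, e j ≠ 0 → y j ≠ 0) :
    HasFDerivAt (laurentMonomial e)
      (∑ j, (∏ m ∈ univ.erase j, y m ^ e m) •
        ((e j * y j ^ (e j - 1)) • ContinuousLinearMap.proj (R := ℂ) (φ := fun _ : ι => ℂ) j))
      y := by
  refine HasFDerivAt.finsetProd fun j _ => ?_
  have hyj : y j ≠ 0 ∨ 0 ≤ e j := by
    by_cases h : e j = 0
    · exact .inr h.ge
    · exact .inl (he j h)
  exact (hasDerivAt_zpow (e j) (y j) hyj).comp_hasFDerivAt (f := fun z : ι → ℂ => z j) y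
    (hasFDerivAt_apply j y)

theorem differentiableAt_laurentMonomial {e : ι → ℤ} {y : ι → ℂ}
    (he : ∀ j, e j ≠ 0 → y j ≠ 0) : DifferentiableAt ℂ (laurentMonomial e) y :=
  (hasFDerivAt_laurentMonomial he).differentiableAt

theorem mul_fderiv_laurentMonomial_single {e : ι → ℤ} {y : ι → ℂ}
    (he : ∀ j, e j ≠ 0 → y j ≠ 0) (i : ι) :
    y i * fderiv ℂ (laurentMonomial e) y (Pi.single i 1) = e i * laurentMonomial e y := by
  rw [(hasFDerivAt_laurentMonomial he).fderiv]
  simp only [_root_.sum_apply, smul_apply, ContinuousLinearMap.proj_apply, Pi.single_apply,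
    smul_eq_mul, mul_ite, mul_one, mul_zero, Finset.sum_ite_eq', Finset.mem_univ, if_true]
  by_cases h : e i = 0
  · simp [h]
  · rw [laurentMonomial, ← Finset.mul_prod_erase univ _ (mem_univ i)]
    calc y i * ((∏ m ∈ univ.erase i, y m ^ e m) * (e i * y i ^ (e i - 1)))
        = e i * ((y i * y i ^ (e i - 1)) * ∏ m ∈ univ.erase i, y m ^ e m) := by ring
      _ = e i * (y i ^ e i * ∏ m ∈ univ.erase i, y m ^ e m) := by
        rw [← zpow_one_add₀ (he i h), add_sub_cancel]

end LaurentMonomial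

section Bracket

variable {K : ℕ}

theorem yv_eq (y : YV K) {j : ℕ} (h : j < 2*K+1) : yv K y j = y ⟨j, h⟩ := by
  simp only [yv, Nat.mod_eq_of_lt h]

def logCanonicalForm (K : ℕ) (e f : Fin (2*K+1) → ℤ) : ℤ :=
  ∑ i : Fin (2*K-1),
    (e ⟨(i:ℕ)+1, by omega⟩ * f ⟨(i:ℕ)+2, by omega⟩ - e ⟨(i:ℕ)+2, by omega⟩ * f ⟨(i:ℕ)+1, by omega⟩)

theorem lcBr_laurentMonomial {e f : Fin (2*K+1) → ℤ} {y : YV K}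
    (he : ∀ j, e j ≠ 0 → y j ≠ 0) (hf : ∀ j, f j ≠ 0 → y j ≠ 0) :
    lcBr K (laurentMonomial e) (laurentMonomial f) y
      = logCanonicalForm K e f / 4 * (laurentMonomial e y * laurentMonomial f y) := by
  rw [lcBr, logCanonicalForm, Int.cast_sum, Finset.sum_div, Finset.sum_mul, Finset.mul_sum]
  refine Finset.sum_congr rfl fun i _ => ?_
  have h1 : (i:ℕ) + 1 < 2*K+1 := by omega
  have h2 : (i:ℕ) + 2 < 2*K+1 := by omega
  have hA := mul_fderiv_laurentMonomial_single he ⟨_, h1⟩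
  have hB := mul_fderiv_laurentMonomial_single he ⟨_, h2⟩
  have hC := mul_fderiv_laurentMonomial_single hf ⟨_, h1⟩
  have hD := mul_fderiv_laurentMonomial_single hf ⟨_, h2⟩
  simp only [pY, yv_eq y h1, yv_eq y h2]
  push_cast
  linear_combination (1 / 4 : ℂ) *
    (y ⟨_, h2⟩ * fderiv ℂ (laurentMonomial f) y (Pi.single ⟨_, h2⟩ 1) * hA
      + e ⟨_, h1⟩ * laurentMonomial e y * hD
      - y ⟨_, h1⟩ * fderiv ℂ (laurentMonomial f) y (Pi.single ⟨_, h1⟩ 1) * hB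
      - e ⟨_, h2⟩ * laurentMonomial e y * hC)

variable {f g g₁ g₂ f₁ f₂ : YV K → ℂ} {y : YV K}

theorem lcBr_congr {f' g' : YV K → ℂ} (hf : f =ᶠ[nhds y] f') (hg : g =ᶠ[nhds y] g') :
    lcBr K f g y = lcBr K f' g' y := by
  simp only [lcBr, pY, hf.fderiv_eq, hg.fderiv_eq]

theorem lcBr_swap : lcBr K f g y = -lcBr K g f y := by
  simp only [lcBr, ← mul_neg, ← Finset.sum_neg_distrib]
  congr 1
  exact Finset.sum_congr rfl fun _ _ => by ring

theorem lcBr_add_left (hf₁ : DifferentiableAt ℂ f₁ y) (hf₂ : DifferentiableAt ℂ f₂ y) :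
    lcBr K (fun z => f₁ z + f₂ z) g y = lcBr K f₁ g y + lcBr K f₂ g y := by
  simp only [lcBr, pY, fderiv_fun_add hf₁ hf₂, add_apply, ← mul_add,
    ← Finset.sum_add_distrib]
  congr 1
  exact Finset.sum_congr rfl fun _ _ => by ring

theorem lcBr_add_right (hg₁ : DifferentiableAt ℂ g₁ y) (hg₂ : DifferentiableAt ℂ g₂ y) :
    lcBr K f (fun z => g₁ z + g₂ z) y = lcBr K f g₁ y + lcBr K f g₂ y := by
  rw [lcBr_swap, lcBr_add_left hg₁ hg₂, lcBr_swap (f := g₁), lcBr_swap (f := g₂)]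
  ring

theorem lcBr_const_mul_right (hg : DifferentiableAt ℂ g y) (c : ℂ) :
    lcBr K f (fun z => c * g z) y = c * lcBr K f g y := by
  simp only [lcBr, pY, fderiv_const_mul hg, smul_apply, smul_eq_mul,
    Finset.mul_sum]
  exact Finset.sum_congr rfl fun _ _ => by ring

theorem lcBr_neg_right : lcBr K f (fun z => -g z) y = -lcBr K f g y := by
  simp only [lcBr, pY, fderiv_fun_neg, neg_apply, ← mul_neg,
    ← Finset.sum_neg_distrib]
  congr 1
  exact Finset.sum_congr rfl fun _ _ => by ring

theorem logCanonicalForm_comp_val (u v : ℕ → ℤ) :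
    logCanonicalForm K (u ∘ Fin.val) (v ∘ Fin.val)
      = ∑ p ∈ range (2*K-1), (u (p+1) * v (p+2) - u (p+2) * v (p+1)) :=
  Fin.sum_univ_eq_sum_range (fun p => u (p+1) * v (p+2) - u (p+2) * v (p+1)) _

end Bracket

section AlternatingExponents

def altExp (n : ℕ) (c : ℤ) (p : ℕ) : ℤ := if 1 ≤ p ∧ p ≤ n then c * (-1) ^ (p + 1) else 0

theorem altExp_mul_sub {n m p : ℕ} (c d : ℤ) (hp : 1 ≤ p) (hnm : n ≤ m) :
    altExp n c p * altExp m d (p+1) - altExp n c (p+1) * altExp m d p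
      = if p = n ∧ n < m then -(c * d) else 0 := by
  have hsucc : (-1 : ℤ) ^ (p + 1 + 1) = -(-1) ^ (p + 1) := by rw [pow_succ]; ring
  have hsq : (-1 : ℤ) ^ (p + 1) * (-1) ^ (p + 1) = 1 := by
    rw [← pow_add, Even.neg_one_pow ⟨p + 1, rfl⟩]
  simp only [altExp, hsucc]
  generalize (-1 : ℤ) ^ (p + 1) = s at hsq ⊢
  split_ifs <;> first | (exfalso; omega) | ring1 | linear_combination (-(c * d)) * hsq

theorem logCanonicalForm_altExp {K n m : ℕ} (c d : ℤ) (hn : 1 ≤ n) (hnm : n ≤ m) :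
    logCanonicalForm K (altExp n c ∘ Fin.val) (altExp m d ∘ Fin.val)
      = if n < m ∧ n < 2*K then -(c * d) else 0 := by
  rw [logCanonicalForm_comp_val]
  simp only [altExp_mul_sub c d (Nat.le_add_left 1 _) hnm]
  split_ifs with hlt
  · rw [Finset.sum_eq_single_of_mem (n - 1) (by simp; omega) fun p _ hp => if_neg (by omega),
      if_pos (by omega)]
  · exact Finset.sum_eq_zero fun p hp => if_neg (by simp at hp; omega)

theorem altExp_pred_comp_val {K n : ℕ} (c : ℤ) (hn : 1 ≤ n) (hnK : n < 2*K+1) :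
    (altExp (n - 1) c ∘ Fin.val : Fin (2*K+1) → ℤ)
      = altExp n c ∘ Fin.val + Pi.single ⟨n, hnK⟩ (c * (-1) ^ n) := by
  funext m
  by_cases hm : (m : ℕ) = n
  · have hm' : m = ⟨n, hnK⟩ := Fin.ext hm
    subst hm'
    simp only [Function.comp_apply, altExp, Pi.add_apply, Pi.single_eq_same, pow_succ]
    rw [if_neg (by omega), if_pos ⟨hn, le_rfl⟩]
    ring
  · simp only [Function.comp_apply, altExp, Pi.add_apply,
      Pi.single_eq_of_ne (show m ≠ ⟨n, hnK⟩ from fun h => hm (congrArg Fin.val h)), add_zero]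
    exact if_congr (by omega) rfl rfl

end AlternatingExponents

section StokesParameters

variable {K : ℕ}

def torus (K : ℕ) : Set (YV K) := {z | ∀ i : Fin (2*K+1), (i:ℕ) ≠ 0 → z i ≠ 0}

theorem isOpen_torus : IsOpen (torus K) := by
  simp only [torus, Set.ofPred_forall]
  exact isOpen_iInter_of_finite fun i => isOpen_iInter_of_finite fun _ =>
    isOpen_ne_fun (continuous_apply i) continuous_const

theorem torus_ne_zero_of_altExp_ne_zero {z : YV K} (hz : z ∈ torus K) (n : ℕ) (c : ℤ) :
    ∀ j, (altExp n c ∘ Fin.val) j ≠ 0 → z j ≠ 0 := fun j hj =>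
  hz j fun h0 => hj (by simp [altExp, h0])

theorem prod_range_yv_eq_laurentMonomial {n : ℕ} (hn : n ≤ 2*K) {u : ℕ → ℤ}
    (hu : ∀ p, u p ≠ 0 → 1 ≤ p ∧ p ≤ n) (z : YV K) :
    ∏ j ∈ range n, yv K z (j+1) ^ u (j+1) = laurentMonomial (u ∘ Fin.val) z := by
  have hsupp : ∀ p ∈ range (2*K+1), p ∉ range (n+1) → yv K z p ^ u p = 1 := fun p _ hp => by
    rw [show u p = 0 by by_contra h; have := hu p h; simp at hp; omega, zpow_zero]
  have h0 : u 0 = 0 := by by_contra h; have := hu 0 h; omega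
  calc ∏ j ∈ range n, yv K z (j+1) ^ u (j+1)
      = ∏ p ∈ range (n+1), yv K z p ^ u p := by rw [Finset.prod_range_succ', h0, zpow_zero, mul_one]
    _ = ∏ p ∈ range (2*K+1), yv K z p ^ u p := Finset.prod_subset (by simp; omega) hsupp
    _ = ∏ m : Fin (2*K+1), yv K z m ^ u m := (Fin.prod_univ_eq_prod_range _ _).symm
    _ = laurentMonomial (u ∘ Fin.val) z :=
      Finset.prod_congr rfl fun m _ => by rw [yv_eq z m.isLt]; rfl

theorem laurentMonomial_altExp_mul_neg {z : YV K} (hz : z ∈ torus K) (n : ℕ) (c : ℤ) :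
    laurentMonomial (altExp n c ∘ Fin.val) z * laurentMonomial (altExp n (-c) ∘ Fin.val) z = 1 := by
  have hneg : altExp n (-c) ∘ Fin.val = -(altExp n c ∘ Fin.val : Fin (2*K+1) → ℤ) := by
    funext m
    simp only [Function.comp_apply, Pi.neg_apply, altExp]
    split_ifs <;> ring
  rw [hneg, laurentMonomial_neg,
    mul_inv_cancel₀ (laurentMonomial_ne_zero (torus_ne_zero_of_altExp_ne_zero hz n c))]

theorem prod_range_yv_eq_laurentMonomial_altExp {n : ℕ} (hn : n ≤ 2*K) (c : ℤ) (z : YV K) :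
    ∏ j ∈ range n, yv K z (j+1) ^ (c * (-1) ^ j) = laurentMonomial (altExp n c ∘ Fin.val) z := by
  rw [← prod_range_yv_eq_laurentMonomial hn (fun p hp => by by_contra h; exact hp (if_neg h))]
  refine Finset.prod_congr rfl fun j hj => ?_
  rw [altExp, if_pos (by simp at hj; omega)]
  congr 1
  ring

theorem sY_even {k : ℕ} (hk1 : 1 ≤ k) (hk : k ≤ K) {z : YV K} (hz : z ∈ torus K) :
    sY K (2*k) z = laurentMonomial (altExp (2*k) 2 ∘ Fin.val) z
      + laurentMonomial (altExp (2*k-1) 2 ∘ Fin.val) z := by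
  have h2k : 2*k < 2*K+1 := by omega
  have hprod := prod_range_yv_eq_laurentMonomial_altExp (show 2*k ≤ 2*K by omega) 2 z
  simp only [mul_comm (2 : ℤ)] at hprod
  rw [sY, if_neg (by omega), if_neg (by omega), if_neg (by omega), if_pos (by omega), hprod,
    altExp_pred_comp_val 2 (by omega) h2k, laurentMonomial_add_single (hz _ (by simp; omega)),
    yv_eq z h2k, (even_two_mul k).neg_one_pow, mul_one, zpow_two]
  ring

-- `s_{2K+1}` lacks the factor `1 + y_{2K+1}²` of the other odd parameters.
theorem sY_odd {l : ℕ} (hl1 : 1 ≤ l) (hl : l ≤ K) {z : YV K} (hz : z ∈ torus K) :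
    sY K (2*l+1) z = -(laurentMonomial (altExp (2*l) (-2) ∘ Fin.val) z
      + (if l < K then 1 else 0) * laurentMonomial (altExp (2*l+1) (-2) ∘ Fin.val) z) := by
  have hprod : ∀ n ≤ 2*K, ∏ j ∈ range n, yv K z (j+1) ^ ((-1 : ℤ) ^ (j+1) * 2)
      = laurentMonomial (altExp n (-2) ∘ Fin.val) z := fun n hn => by
    rw [← prod_range_yv_eq_laurentMonomial_altExp hn]
    exact Finset.prod_congr rfl fun j _ => by congr 1; ring
  rcases hl.lt_or_eq with hlt | rfl
  · have h2l : 2*l+1 < 2*K+1 := by omega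
    have hpred := altExp_pred_comp_val (-2) (by omega) h2l
    rw [Nat.add_sub_cancel, (odd_two_mul_add_one l).neg_one_pow] at hpred
    rw [sY, if_neg (by omega), if_neg (by omega), if_neg (by omega), if_neg (by omega),
      hprod _ (by omega), hpred, laurentMonomial_add_single (hz _ (by simp)), yv_eq z h2l,
      if_pos hlt]
    rw [show (-2 : ℤ) * -1 = 2 by norm_num, zpow_two]
    ring
  · rw [sY, if_neg (by omega), if_pos rfl, hprod _ le_rfl, if_neg (lt_irrefl l), zero_mul,
      add_zero]

end StokesParameters

end ClusterBracket

open ClusterBracket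

theorem cluster_bracket_even_odd_general (K : ℕ) (y : YV K)
    (hy : ∀ i : Fin (2*K+1), (i:ℕ) ≠ 0 → y i ≠ 0)
    (k l : ℕ) (hk1 : 1 ≤ k) (hkl : k ≤ l) (hl : l ≤ K) :
    lcBr K (sY K (2*k)) (sY K (2*l+1)) y
      = (if k = l then 1 else 0) + sY K (2*k) y * sY K (2*l+1) y := by
  have htorus : ∀ᶠ z in nhds y, z ∈ torus K := isOpen_torus.mem_nhds hy
  have hs : sY K (2*k) =ᶠ[nhds y] _ := htorus.mono fun z hz => sY_even hk1 (hkl.trans hl) hz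
  have ht : sY K (2*l+1) =ᶠ[nhds y] _ := htorus.mono fun z hz => sY_odd (hk1.trans hkl) hl hz
  have hne := torus_ne_zero_of_altExp_ne_zero hy
  have hd := fun n c => differentiableAt_laurentMonomial (hne n c)
  rw [lcBr_congr hs ht, hs.eq_of_nhds, ht.eq_of_nhds, lcBr_neg_right,
    lcBr_add_left (hd _ _) (hd _ _), lcBr_add_right (hd _ _) ((hd _ _).const_mul _),
    lcBr_add_right (hd _ _) ((hd _ _).const_mul _), lcBr_const_mul_right (hd _ _),
    lcBr_const_mul_right (hd _ _)]
  simp only [lcBr_laurentMonomial (hne _ _) (hne _ _)]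
  rw [logCanonicalForm_altExp (n := 2*k) (m := 2*l) _ _ (by omega) (by omega),
    logCanonicalForm_altExp (n := 2*k) (m := 2*l+1) _ _ (by omega) (by omega),
    logCanonicalForm_altExp (n := 2*k-1) (m := 2*l) _ _ (by omega) (by omega),
    logCanonicalForm_altExp (n := 2*k-1) (m := 2*l+1) _ _ (by omega) (by omega)]
  have hinv := laurentMonomial_altExp_mul_neg hy (2*k) 2
  split_ifs <;> first | omega | (subst_vars; push_cast; linear_combination hinv) | (push_cast; ring)

/-- for `1 ≤ k ≤ l ≤ K`,
`{s_{2k}, s_{2l+1}}_y = δ_{k,l} + s_{2k} s_{2l+1}`, identically on `(ℂ*)^{2K}`;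
in particular it equals `1 + s_{2k}s_{2k+1}` for `l = k` and `s_{2k}s_{2l+1}` for `l > k`. -/
theorem cluster_bracket_even_odd (K : ℕ) (hK : 1 ≤ K) (y : YV K)
    (hy : ∀ i : Fin (2*K+1), (i:ℕ) ≠ 0 → y i ≠ 0)
    (k l : ℕ) (hk1 : 1 ≤ k) (hkl : k ≤ l) (hl : l ≤ K) :
    lcBr K (sY K (2*k)) (sY K (2*l+1)) y
      = (if k = l then 1 else 0) + sY K (2*k) y * sY K (2*l+1) y :=
  cluster_bracket_even_odd_general K y hy k l hk1 hkl hl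
end
end

section
/- Let x, y ∈ ℂ* with 1 + y² ≠ 0, and let x̃ ∈ ℂ* satisfy x̃² = x² y² / (1 + y²). Then the 2×2 matrix identity V((xy)^{−1}) · A · V(y) · A · D(x)^{−1} = V(x̃^{−1}) · A · D(x̃)^{−1} holds, both sides being equal to the upper-triangular unipotent matrix [[1, x^{−2}(1 + y^{−2})],[0,1]]. (This is the matrix equation for the Stokes matrix S_{2i+1} arising from a flip of a triangulation, Case 1 of Section 3.3, solved by the cluster mutation relations ỹ_{j+1}² = 1/y_{j+1}², ỹ_j² = (1 + y_{j+1}²) y_j².) -/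
noncomputable section

open Matrix

/-- The diagonal jump matrix `D(a) = diag(a⁻¹, a)`. -/
def Dm (a : ℂ) : Matrix (Fin 2) (Fin 2) ℂ := !![a⁻¹, 0; 0, a]

/-- The off-diagonal jump matrix `V(a) = [[0, −a],[a⁻¹, 0]]`. -/
def Vm (a : ℂ) : Matrix (Fin 2) (Fin 2) ℂ := !![0, -a; a⁻¹, 0]

/-- The constant triangle matrix `A = [[0,1],[−1,−1]]` (satisfying `A³ = 𝟙`). -/
def Am : Matrix (Fin 2) (Fin 2) ℂ := !![0, 1; -1, -1]

lemma Dm_inv (a : ℂ) (ha : a ≠ 0) : (Dm a)⁻¹ = Dm a⁻¹ := by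
  apply inv_eq_right_inv
  simp [Dm, Matrix.mul_fin_two, mul_inv_cancel₀ ha, inv_mul_cancel₀ ha, inv_inv,
    ← Matrix.one_fin_two]

set_option maxHeartbeats 1000000 in
/-- for `x, y ∈ ℂ*` with `1 + y² ≠ 0` and `x̃ ∈ ℂ*` with
`x̃² = x²y²/(1+y²)`, one has
`V((xy)⁻¹)·A·V(y)·A·D(x)⁻¹ = V(x̃⁻¹)·A·D(x̃)⁻¹`, both sides being equal to
`[[1, x^{−2}(1+y^{−2})],[0,1]]` (the flip/mutation identity, Case 1 of Sec. 3.3). -/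
theorem flip_case_one (x y xt : ℂ) (hx : x ≠ 0) (hy : y ≠ 0) (h1y : 1 + y^2 ≠ 0)
    (hxt : xt ≠ 0) (hrel : xt^2 = x^2 * y^2 / (1 + y^2)) :
    Vm ((x*y)⁻¹) * Am * Vm y * Am * (Dm x)⁻¹
        = !![1, x^(-2:ℤ) * (1 + y^(-2:ℤ)); 0, 1]
    ∧ Vm (xt⁻¹) * Am * (Dm xt)⁻¹
        = !![1, x^(-2:ℤ) * (1 + y^(-2:ℤ)); 0, 1] := by
  have hxy : x * y ≠ 0 := mul_ne_zero hx hy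
  have hs : xt⁻¹ * xt⁻¹ = (1 + y^2) / (x^2 * y^2) := by
    rw [← mul_inv, ← sq, hrel, inv_div]
  constructor
  · rw [Dm_inv x hx]
    ext i j
    fin_cases i <;> fin_cases j <;>
      simp [Dm, Vm, Am, Matrix.mul_fin_two, _root_.zpow_neg, zpow_ofNat]
    · field_simp
    · have h1 : (y⁻¹ * x⁻¹ * y⁻¹ + y⁻¹ * x⁻¹ * y) * x⁻¹
          = (x^2)⁻¹ * (y^2)⁻¹ + (x^2)⁻¹ * (y⁻¹ * y) := by
        rw [← inv_pow, ← inv_pow]; ring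
      rw [h1, inv_mul_cancel₀ hy, mul_one]; ring
    · field_simp
  · rw [Dm_inv xt hxt]
    ext i j
    fin_cases i <;> fin_cases j <;>
      simp [Dm, Vm, Am, Matrix.mul_fin_two, _root_.zpow_neg, zpow_ofNat]
    · exact inv_mul_cancel₀ hxt
    · rw [hs, div_eq_iff (mul_ne_zero (pow_ne_zero 2 hx) (pow_ne_zero 2 hy))]
      have hx2 : x^2*(x^2)⁻¹ = 1 := mul_inv_cancel₀ (pow_ne_zero 2 hx)
      have hy2 : y^2*(y^2)⁻¹ = 1 := mul_inv_cancel₀ (pow_ne_zero 2 hy)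
      have h : (x^2)⁻¹*(1+(y^2)⁻¹)*(x^2*y^2) = (x^2*(x^2)⁻¹)*(y^2 + y^2*(y^2)⁻¹) := by
        ring
      rw [h, hx2, hy2, one_mul, add_comm]
    · exact mul_inv_cancel₀ hxt
end
end
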